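/- arXiv:1509.09251 — 3 statements merged into one kernel-verified Lean document; each statement's English description precedes it below -/
import Mathlib

section
/- Let λ be a strict partition with exactly n parts and let A ∈ UA^λ(n) with compass point matrix C(A). Then for every row index i ∈ {1, 1̄, …, n, n̄}: #WE_i = #NS_i + χ(P_i), where #XY_i is the number of entries XY in row i of C(A) and P_i is the condition that the first entry c_{i1} of row i of C(A) lies in {WE, SW, NW}, with χ(P) = 1 if P holds and 0 otherwise. -/
open scoped Classical BigOperators

namespace TokC

/-- The letter (0-based) of an element of the alphabet `Fin (2*n)`, where index `2*k`
represents the unbarred letter `k+1` and index `2*k+1` represents the barred letter. -/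
def letK {n : ℕ} (ℓ : Fin (2 * n)) : Fin n :=
  ⟨ℓ.val / 2, by have := ℓ.isLt; omega⟩

/-- The alphabet index of the unbarred letter `k` (0-based). -/
def rU {n : ℕ} (k : Fin n) : Fin (2 * n) := ⟨2 * k.val, by have := k.isLt; omega⟩

/-- The alphabet index of the barred letter `k̄` (0-based). -/
def rB {n : ℕ} (k : Fin n) : Fin (2 * n) := ⟨2 * k.val + 1, by have := k.isLt; omega⟩

/-! ### Young diagrams and symplectic tableaux -/

/-- Boxes of the Young diagram of `μ` (rows 0-indexed by `Fin n`, columns 0-indexed). -/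
def ydBoxes (n : ℕ) (μ : Fin n → ℕ) : Finset (Fin n × ℕ) :=
  Finset.univ.biUnion fun i => (Finset.range (μ i)).image fun j => (i, j)

/-- A symplectic tableau of shape `μ`: rows weakly increase, columns strictly increase,
and every entry of row `k` is at least the unbarred letter `k`. -/
def IsSympTab (n : ℕ) (μ : Fin n → ℕ)
    (T : {p // p ∈ ydBoxes n μ} → Fin (2 * n)) : Prop :=
  (∀ p q : {p // p ∈ ydBoxes n μ}, p.1.1 = q.1.1 → p.1.2 ≤ q.1.2 → T p ≤ T q) ∧
  (∀ p q : {p // p ∈ ydBoxes n μ}, p.1.2 = q.1.2 → p.1.1 < q.1.1 → T p < T q) ∧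
  (∀ p : {p // p ∈ ydBoxes n μ}, 2 * p.1.1.val ≤ (T p).val)

/-- Contribution of a single entry to the deformed symplectic character:
`x_k` for the unbarred letter `k`, `t²·x_k⁻¹` for the barred letter `k̄`. -/
noncomputable def spWgtE {K : Type*} [Field K] {n : ℕ} (x : Fin n → K) (t : K)
    (ℓ : Fin (2 * n)) : K :=
  if ℓ.val % 2 = 0 then x (letK ℓ) else t ^ 2 * (x (letK ℓ))⁻¹

/-- The deformed symplectic character `sp_μ(x;t)`. -/
noncomputable def spChar {K : Type*} [Field K] (n : ℕ) (μ : Fin n → ℕ)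
    (x : Fin n → K) (t : K) : K :=
  ∑ᶠ (T : {p // p ∈ ydBoxes n μ} → Fin (2 * n)) (_ : IsSympTab n μ T),
    ∏ p : {p // p ∈ ydBoxes n μ}, spWgtE x t (T p)

/-! ### Shifted diagrams, symplectic shifted tableaux and primed tableaux -/

/-- Boxes of the shifted diagram of `lam` (0-indexed): row `i` has columns
`i ≤ j < i + lam i`. -/
def sdBoxes (n : ℕ) (lam : Fin n → ℕ) : Finset (ℕ × ℕ) :=
  Finset.univ.biUnion fun i : Fin n =>
    (Finset.Ico i.val (i.val + lam i)).image fun j => (i.val, j)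

/-- A symplectic shifted tableau: rows and columns weakly increase, and diagonals
(top-left to bottom-right) strictly increase. -/
def IsSST (n : ℕ) (lam : Fin n → ℕ)
    (S : {p // p ∈ sdBoxes n lam} → Fin (2 * n)) : Prop :=
  (∀ p q : {p // p ∈ sdBoxes n lam}, p.1.1 = q.1.1 → p.1.2 ≤ q.1.2 → S p ≤ S q) ∧
  (∀ p q : {p // p ∈ sdBoxes n lam}, p.1.2 = q.1.2 → p.1.1 ≤ q.1.1 → S p ≤ S q) ∧
  (∀ p q : {p // p ∈ sdBoxes n lam}, q.1.1 = p.1.1 + 1 → q.1.2 = p.1.2 + 1 → S p < S q)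

/-- A primed symplectic shifted tableau: an underlying symplectic shifted tableau `S`
together with a marking `P` such that a box equal to its left neighbour is unmarked and
a box equal to the box below it is marked. -/
def IsQT (n : ℕ) (lam : Fin n → ℕ)
    (S : {p // p ∈ sdBoxes n lam} → Fin (2 * n))
    (P : {p // p ∈ sdBoxes n lam} → Bool) : Prop :=
  IsSST n lam S ∧
  (∀ p q : {p // p ∈ sdBoxes n lam},
      q.1.1 = p.1.1 → q.1.2 = p.1.2 + 1 → S p = S q → P q = false) ∧
  (∀ p q : {p // p ∈ sdBoxes n lam},
      q.1.1 = p.1.1 + 1 → q.1.2 = p.1.2 → S p = S q → P p = true)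

/-- Weight of a single (possibly primed) entry: `x_k`, `y_k` (primed), `t²x_k⁻¹`,
`t²y_k⁻¹` (primed). -/
noncomputable def qtWgtE {K : Type*} [Field K] {n : ℕ} (x y : Fin n → K) (t : K)
    (ℓ : Fin (2 * n)) (b : Bool) : K :=
  if ℓ.val % 2 = 0 then (if b then y (letK ℓ) else x (letK ℓ))
  else t ^ 2 * (if b then (y (letK ℓ))⁻¹ else (x (letK ℓ))⁻¹)

/-- The deformed symplectic Q-function `Q_λ(x/y;t)`. -/
noncomputable def QFun {K : Type*} [Field K] (n : ℕ) (lam : Fin n → ℕ)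
    (x y : Fin n → K) (t : K) : K :=
  ∑ᶠ (SP : ({p // p ∈ sdBoxes n lam} → Fin (2 * n)) ×
        ({p // p ∈ sdBoxes n lam} → Bool)) (_ : IsQT n lam SP.1 SP.2),
    ∏ p : {p // p ∈ sdBoxes n lam}, qtWgtE x y t (SP.1 p) (SP.2 p)

/-! ### Neighbour-dependent weights on symplectic shifted tableaux -/

/-- The weight of the entry of box `p` in an unprimed symplectic shifted tableau,
as in Theorem `thm-main`: `x_k` if the left neighbour is equal, `y_k` if the neighbour
below is equal, `x_k + y_k` otherwise (barred letters use inverses). -/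
noncomputable def stWgtE {K : Type*} [Field K] (n : ℕ) (lam : Fin n → ℕ)
    (x y : Fin n → K)
    (S : {p // p ∈ sdBoxes n lam} → Fin (2 * n)) (p : {p // p ∈ sdBoxes n lam}) : K :=
  let k := letK (S p)
  let leftSame : Prop :=
    0 < p.1.2 ∧ ∃ h : (p.1.1, p.1.2 - 1) ∈ sdBoxes n lam, S ⟨(p.1.1, p.1.2 - 1), h⟩ = S p
  let belowSame : Prop :=
    ∃ h : (p.1.1 + 1, p.1.2) ∈ sdBoxes n lam, S ⟨(p.1.1 + 1, p.1.2), h⟩ = S p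
  if (S p).val % 2 = 0 then
    (if leftSame then x k else if belowSame then y k else x k + y k)
  else
    (if leftSame then (x k)⁻¹ else if belowSame then (y k)⁻¹ else (x k)⁻¹ + (y k)⁻¹)

/-- The `q`-deformed weight of the entry of box `p` in an unprimed symplectic shifted
tableau: `x_k` if the left neighbour is equal, `q·x_k` if the neighbour above is
equal, `(1+q)·x_k` otherwise (barred letters use inverses and `q⁻¹`). -/
noncomputable def stWgtQE {K : Type*} [Field K] (n : ℕ) (lam : Fin n → ℕ)
    (x : Fin n → K) (q : K)
    (S : {p // p ∈ sdBoxes n lam} → Fin (2 * n)) (p : {p // p ∈ sdBoxes n lam}) : K :=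
  let k := letK (S p)
  let leftSame : Prop :=
    0 < p.1.2 ∧ ∃ h : (p.1.1, p.1.2 - 1) ∈ sdBoxes n lam, S ⟨(p.1.1, p.1.2 - 1), h⟩ = S p
  let aboveSame : Prop :=
    0 < p.1.1 ∧ ∃ h : (p.1.1 - 1, p.1.2) ∈ sdBoxes n lam, S ⟨(p.1.1 - 1, p.1.2), h⟩ = S p
  if (S p).val % 2 = 0 then
    (if leftSame then x k else if aboveSame then q * x k else (1 + q) * x k)
  else
    (if leftSame then (x k)⁻¹ else if aboveSame then q⁻¹ * (x k)⁻¹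
     else (1 + q⁻¹) * (x k)⁻¹)

/-! ### U-turn alternating sign matrices and compass point matrices -/

/-- A `U`-turn alternating sign matrix of shape `lam` with `2n` rows
(indexed `1, 1̄, …, n, n̄` from the top) and `m` columns. -/
def IsUASM (n m : ℕ) (lam : Fin n → ℕ) (A : Fin (2 * n) → Fin m → ℤ) : Prop :=
  (∀ i j, A i j = -1 ∨ A i j = 0 ∨ A i j = 1) ∧
  (∀ (i : Fin (2 * n)) (j₁ j₂ : Fin m), j₁ < j₂ → A i j₁ ≠ 0 → A i j₂ ≠ 0 →
      (∀ j, j₁ < j → j < j₂ → A i j = 0) → A i j₂ = -A i j₁) ∧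
  (∀ (j : Fin m) (i₁ i₂ : Fin (2 * n)), i₁ < i₂ → A i₁ j ≠ 0 → A i₂ j ≠ 0 →
      (∀ i, i₁ < i → i < i₂ → A i j = 0) → A i₂ j = -A i₁ j) ∧
  (∀ (j : Fin m) (i : Fin (2 * n)), A i j ≠ 0 → (∀ i', i' < i → A i' j = 0) → A i j = 1) ∧
  (∀ (i : Fin (2 * n)) (j : Fin m), A i j ≠ 0 → (∀ j', j < j' → A i j' = 0) → A i j = 1) ∧
  (∀ i : Fin (2 * n), (∑ j, A i j) = 0 ∨ (∑ j, A i j) = 1) ∧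
  (∀ j : Fin m, (∑ i, A i j) = 0 ∨ (∑ i, A i j) = 1) ∧
  (∀ k : Fin n, (∑ j, A (rU k) j) + (∑ j, A (rB k) j) = 1) ∧
  (∀ j : Fin m, (∑ i, A i j) = if ∃ k : Fin n, lam k = j.val + 1 then 1 else 0)

/-- Compass point directions. -/
inductive CP : Type
  | WE | NS | NE | SE | NW | SW
  deriving DecidableEq

/-- The nearest nonzero entry strictly above position `(i,j)` in its column
(deemed `-1` if there is none). -/
noncomputable def northV {n m : ℕ} (A : Fin (2 * n) → Fin m → ℤ)
    (i : Fin (2 * n)) (j : Fin m) : ℤ :=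
  let s := Finset.univ.filter fun i' : Fin (2 * n) => i' < i ∧ A i' j ≠ 0
  if h : s.Nonempty then A (s.max' h) j else -1

/-- The nearest nonzero entry strictly to the right of position `(i,j)` in its row
(deemed `-1` if there is none). -/
noncomputable def eastV {n m : ℕ} (A : Fin (2 * n) → Fin m → ℤ)
    (i : Fin (2 * n)) (j : Fin m) : ℤ :=
  let s := Finset.univ.filter fun j' : Fin m => j < j' ∧ A i j' ≠ 0
  if h : s.Nonempty then A i (s.min' h) else -1

/-- The compass point matrix `C(A)` of a UASM `A`. -/
noncomputable def cpm {n m : ℕ} (A : Fin (2 * n) → Fin m → ℤ)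
    (i : Fin (2 * n)) (j : Fin m) : CP :=
  if A i j = 1 then CP.WE
  else if A i j = -1 then CP.NS
  else if northV A i j = 1 then (if eastV A i j = 1 then CP.NW else CP.NE)
  else (if eastV A i j = 1 then CP.SW else CP.SE)

/-- Compass point weights of Corollary `cor-A`. -/
noncomputable def cpWgtXY {K : Type*} [Field K] {n : ℕ} (x y : Fin n → K)
    (i : Fin (2 * n)) (c : CP) : K :=
  if i.val % 2 = 0 then
    match c with
    | CP.WE => x (letK i) + y (letK i)
    | CP.NS => 1 | CP.NE => 1 | CP.SE => 1
    | CP.NW => y (letK i)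
    | CP.SW => x (letK i)
  else
    match c with
    | CP.WE => (x (letK i))⁻¹ + (y (letK i))⁻¹
    | CP.NS => 1 | CP.NE => 1 | CP.SE => 1
    | CP.NW => (y (letK i))⁻¹
    | CP.SW => (x (letK i))⁻¹

/-- The alternative compass point weights with the binomial factors attached to `NS`. -/
noncomputable def cpWgtXY' {K : Type*} [Field K] {n : ℕ} (x y : Fin n → K)
    (i : Fin (2 * n)) (c : CP) : K :=
  if i.val % 2 = 0 then
    match c with
    | CP.WE => 1
    | CP.NS => x (letK i) + y (letK i)
    | CP.NE => 1 | CP.SE => 1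
    | CP.NW => y (letK i)
    | CP.SW => x (letK i)
  else
    match c with
    | CP.WE => 1
    | CP.NS => (x (letK i))⁻¹ + (y (letK i))⁻¹
    | CP.NE => 1 | CP.SE => 1
    | CP.NW => (y (letK i))⁻¹
    | CP.SW => (x (letK i))⁻¹

/-- Compass point weights of Corollary `cor-TokAq`, first form. -/
noncomputable def cpWgtQa {K : Type*} [Field K] {n : ℕ} (x : Fin n → K) (q : K)
    (i : Fin (2 * n)) (c : CP) : K :=
  if i.val % 2 = 0 then
    match c with
    | CP.WE => (1 + q) * x (letK i)
    | CP.NS => 1 | CP.NE => 1 | CP.SE => 1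
    | CP.NW => q * x (letK i)
    | CP.SW => x (letK i)
  else
    match c with
    | CP.WE => (1 + q⁻¹) * (x (letK i))⁻¹
    | CP.NS => 1 | CP.NE => 1 | CP.SE => 1
    | CP.NW => q⁻¹ * (x (letK i))⁻¹
    | CP.SW => (x (letK i))⁻¹

/-- Compass point weights of Corollary `cor-TokAq`, second form. -/
noncomputable def cpWgtQb {K : Type*} [Field K] {n : ℕ} (x : Fin n → K) (q : K)
    (i : Fin (2 * n)) (c : CP) : K :=
  if i.val % 2 = 0 then
    match c with
    | CP.WE => x (letK i)
    | CP.NS => 1 + q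
    | CP.NE => 1 | CP.SE => 1
    | CP.NW => q * x (letK i)
    | CP.SW => x (letK i)
  else
    match c with
    | CP.WE => (x (letK i))⁻¹
    | CP.NS => 1 + q
    | CP.NE => q
    | CP.SE => 1
    | CP.NW => (x (letK i))⁻¹
    | CP.SW => (x (letK i))⁻¹

/-! ### Strict symplectic Gelfand–Tsetlin patterns -/

/-- Entry `m_{k,j}` (0-indexed) of a pattern `M` (row of the unbarred letter `k`). -/
def mU {n : ℕ} (M : Fin (2 * n) → ℕ → ℕ) (k : Fin n) (j : ℕ) : ℕ := M (rU k) j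

/-- Entry `m_{k̄,j}` (0-indexed) of a pattern `M` (row of the barred letter `k̄`). -/
def mB {n : ℕ} (M : Fin (2 * n) → ℕ → ℕ) (k : Fin n) (j : ℕ) : ℕ := M (rB k) j

/-- Entry `m_{\overline{k-1},j}` with the convention that it is `0` when `k = 1`. -/
def mPrevB {n : ℕ} (M : Fin (2 * n) → ℕ → ℕ) (k : Fin n) (j : ℕ) : ℕ :=
  if h : k.val = 0 then 0 else M ⟨2 * k.val - 1, by have := k.isLt; omega⟩ j

/-- A strict symplectic Gelfand–Tsetlin pattern of size `2n`, encoded as a function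
`M : Fin (2n) → ℕ → ℕ` (rows indexed bottom-to-top by `1, 1̄, …, n, n̄`, vanishing
outside the triangular region: row `k` and row `k̄` have `k` entries). -/
def IsGT (n : ℕ) (M : Fin (2 * n) → ℕ → ℕ) : Prop :=
  (∀ (i : Fin (2 * n)) (j : ℕ), i.val / 2 < j → M i j = 0) ∧
  (∀ k : Fin n, ∀ j ≤ k.val, mU M k j ≤ mB M k j ∧ mB M k (j + 1) ≤ mU M k j) ∧
  (∀ k : Fin n, ∀ h : k.val + 1 < n, ∀ j ≤ k.val,
      mB M k j ≤ mU M ⟨k.val + 1, h⟩ j ∧ mU M ⟨k.val + 1, h⟩ (j + 1) ≤ mB M k j) ∧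
  (∀ k : Fin n, ∀ j : ℕ, j + 1 ≤ k.val →
      mU M k (j + 1) < mU M k j ∧ mB M k (j + 1) < mB M k j) ∧
  (∀ k : Fin n, ¬(mU M k k.val = 0 ∧ mB M k k.val = 0))

/-- A strict symplectic Gelfand–Tsetlin pattern with top row `lam`. -/
def IsGTsh (n : ℕ) (lam : Fin n → ℕ) (M : Fin (2 * n) → ℕ → ℕ) : Prop :=
  IsGT n M ∧ ∀ j : Fin n, M ⟨2 * n - 1, by have := j.isLt; omega⟩ j.val = lam j

/-- Strict betweenness condition `B_{kj}`. -/
def Bc {n : ℕ} (M : Fin (2 * n) → ℕ → ℕ) (k : Fin n) (j : ℕ) : Prop :=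
  mPrevB M k j < mU M k j ∧ (j < k.val → mU M k (j + 1) < mPrevB M k j)

/-- Left-saturation condition `L_{kj}`. -/
def Lc {n : ℕ} (M : Fin (2 * n) → ℕ → ℕ) (k : Fin n) (j : ℕ) : Prop :=
  mU M k j = mPrevB M k j

/-- Right-saturation condition `R_{kj}`. -/
def Rc {n : ℕ} (M : Fin (2 * n) → ℕ → ℕ) (k : Fin n) (j : ℕ) : Prop :=
  j < k.val ∧ mPrevB M k j < mU M k j ∧ mPrevB M k j = mU M k (j + 1)

/-- Strict betweenness condition `B_{k̄j}`. -/
def Bb {n : ℕ} (M : Fin (2 * n) → ℕ → ℕ) (k : Fin n) (j : ℕ) : Prop :=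
  mU M k j < mB M k j ∧ (j < k.val → mB M k (j + 1) < mU M k j)

/-- Left-saturation condition `L_{k̄j}`. -/
def Lb {n : ℕ} (M : Fin (2 * n) → ℕ → ℕ) (k : Fin n) (j : ℕ) : Prop :=
  mB M k j = mU M k j

/-- Right-saturation condition `R_{k̄j}`. -/
def Rb {n : ℕ} (M : Fin (2 * n) → ℕ → ℕ) (k : Fin n) (j : ℕ) : Prop :=
  j < k.val ∧ mU M k j < mB M k j ∧ mU M k j = mB M k (j + 1)

/-- Auxiliary predicate: there is a nonzero entry in row `i` at a column `≥ j₀`, and the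
first such entry is `1`. -/
def Qp {n m : ℕ} (A : Fin (2 * n) → Fin m → ℤ) (i : Fin (2 * n)) (j₀ : ℕ) : Prop :=
  ∃ j : Fin m, j₀ ≤ j.val ∧ A i j = 1 ∧
    ∀ j' : Fin m, j₀ ≤ j'.val → j'.val < j.val → A i j' = 0

lemma tail_sum {n m : ℕ} (A : Fin (2 * n) → Fin m → ℤ) (i : Fin (2 * n))
    (h1 : ∀ j, A i j = -1 ∨ A i j = 0 ∨ A i j = 1)
    (h2 : ∀ (j₁ j₂ : Fin m), j₁ < j₂ → A i j₁ ≠ 0 → A i j₂ ≠ 0 →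
      (∀ j, j₁ < j → j < j₂ → A i j = 0) → A i j₂ = -A i j₁)
    (h5 : ∀ j : Fin m, A i j ≠ 0 → (∀ j', j < j' → A i j' = 0) → A i j = 1) :
    ∀ d j₀, m ≤ j₀ + d →
      (∑ j ∈ Finset.univ.filter (fun j : Fin m => j₀ ≤ j.val), A i j)
        = if Qp A i j₀ then 1 else 0 := by
  intro d
  induction d with
  | zero =>
    intro j₀ hj₀
    have hempty : (Finset.univ.filter (fun j : Fin m => j₀ ≤ j.val)) = ∅ := by
      ext j
      simp only [Finset.mem_filter, Finset.mem_univ, true_and, Finset.notMem_empty, iff_false]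
      have := j.isLt; omega
    have hq : ¬ Qp A i j₀ := by
      rintro ⟨j, hj, -, -⟩; have := j.isLt; omega
    rw [hempty, if_neg hq, Finset.sum_empty]
  | succ d ih =>
    intro j₀ hj₀
    by_cases hs : (Finset.univ.filter (fun j : Fin m => j₀ ≤ j.val ∧ A i j ≠ 0)).Nonempty
    · set s := Finset.univ.filter (fun j : Fin m => j₀ ≤ j.val ∧ A i j ≠ 0) with hs_def
      set j₁ := s.min' hs with hj₁def
      have hj₁mem : j₁ ∈ s := s.min'_mem hs
      have hj₁p : j₀ ≤ j₁.val ∧ A i j₁ ≠ 0 := by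
        have := hj₁mem
        rw [hs_def, Finset.mem_filter] at this
        exact this.2
      have hmin : ∀ j : Fin m, j₀ ≤ j.val → A i j ≠ 0 → j₁.val ≤ j.val := by
        intro j hj hne
        exact Fin.le_def.mp (s.min'_le j (by rw [hs_def, Finset.mem_filter]; exact ⟨Finset.mem_univ _, hj, hne⟩))
      have hsub : insert j₁ (Finset.univ.filter fun j : Fin m => j₁.val + 1 ≤ j.val)
          ⊆ Finset.univ.filter (fun j : Fin m => j₀ ≤ j.val) := by
        intro x hx
        simp only [Finset.mem_insert, Finset.mem_filter, Finset.mem_univ, true_and] at hx ⊢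
        rcases hx with rfl | hx
        · exact hj₁p.1
        · omega
      have hnm : j₁ ∉ (Finset.univ.filter fun j : Fin m => j₁.val + 1 ≤ j.val) := by
        simp
      have hzero : ∀ x ∈ Finset.univ.filter (fun j : Fin m => j₀ ≤ j.val),
          x ∉ insert j₁ (Finset.univ.filter fun j : Fin m => j₁.val + 1 ≤ j.val) →
          A i x = 0 := by
        intro x hx hxn
        simp only [Finset.mem_filter, Finset.mem_univ, true_and] at hx
        simp only [Finset.mem_insert, Finset.mem_filter, Finset.mem_univ, true_and,
          not_or, not_le] at hxn
        by_contra hne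
        have h1' := hmin x hx hne
        have : x = j₁ := Fin.ext (by omega)
        exact hxn.1 this
      have hsum : (∑ j ∈ Finset.univ.filter (fun j : Fin m => j₀ ≤ j.val), A i j)
          = A i j₁ + ∑ j ∈ Finset.univ.filter (fun j : Fin m => j₁.val + 1 ≤ j.val), A i j := by
        rw [← Finset.sum_subset hsub hzero, Finset.sum_insert hnm]
      have hrec := ih (j₁.val + 1) (by omega)
      by_cases hs2 : (Finset.univ.filter
          (fun j : Fin m => j₁.val + 1 ≤ j.val ∧ A i j ≠ 0)).Nonempty
      · set s2 := Finset.univ.filter (fun j : Fin m => j₁.val + 1 ≤ j.val ∧ A i j ≠ 0)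
          with hs2def
        set j₂ := s2.min' hs2 with hj₂def
        have hj₂mem : j₂ ∈ s2 := s2.min'_mem hs2
        have hj₂p : j₁.val + 1 ≤ j₂.val ∧ A i j₂ ≠ 0 := by
          have := hj₂mem
          rw [hs2def, Finset.mem_filter] at this
          exact this.2
        have hmin2 : ∀ j : Fin m, j₁.val + 1 ≤ j.val → A i j ≠ 0 → j₂.val ≤ j.val := by
          intro j hj hne
          exact Fin.le_def.mp (s2.min'_le j (by rw [hs2def, Finset.mem_filter]; exact ⟨Finset.mem_univ _, hj, hne⟩))
        have halt : A i j₂ = -A i j₁ := by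
          apply h2 j₁ j₂ (by rw [Fin.lt_def]; omega) hj₁p.2 hj₂p.2
          intro j hja hjb
          rw [Fin.lt_def] at hja hjb
          by_contra hne
          have := hmin2 j (by omega) hne
          omega
        have hQiff : Qp A i (j₁.val + 1) ↔ A i j₂ = 1 := by
          constructor
          · rintro ⟨j, hj, hj1, hj0⟩
            have hle : j₂.val ≤ j.val := hmin2 j hj (by rw [hj1]; norm_num)
            rcases eq_or_lt_of_le hle with heq | hlt
            · rwa [show j₂ = j from Fin.ext heq]
            · exact absurd (hj0 j₂ hj₂p.1 hlt) hj₂p.2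
          · intro h
            refine ⟨j₂, hj₂p.1, h, fun j' hj' hlt => ?_⟩
            by_contra hne
            have := hmin2 j' hj' hne; omega
        rcases h1 j₁ with hv | hv | hv
        · have h2v : A i j₂ = 1 := by rw [halt, hv]; ring
          have hq0 : ¬ Qp A i j₀ := by
            rintro ⟨j, hj, hj1, hj0⟩
            have hle : j₁.val ≤ j.val := hmin j hj (by rw [hj1]; norm_num)
            rcases eq_or_lt_of_le hle with heq | hlt
            · rw [show j = j₁ from Fin.ext heq.symm, hv] at hj1; norm_num at hj1
            · exact hj₁p.2 (hj0 j₁ hj₁p.1 hlt)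
          rw [hsum, hrec, if_pos (hQiff.mpr h2v), if_neg hq0, hv]; ring
        · exact absurd hv hj₁p.2
        · have h2v : A i j₂ = -1 := by rw [halt, hv]
          have hq0 : Qp A i j₀ := by
            refine ⟨j₁, hj₁p.1, hv, fun j' hj' hlt => ?_⟩
            by_contra hne
            have := hmin j' hj' hne; omega
          have hnq : ¬ Qp A i (j₁.val + 1) := by
            intro h
            rw [hQiff, h2v] at h; norm_num at h
          rw [hsum, hrec, if_neg hnq, if_pos hq0, hv]; ring
      · have hv : A i j₁ = 1 := by
          apply h5 j₁ hj₁p.2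
          intro j' hj'
          by_contra hne
          exact hs2 ⟨j', Finset.mem_filter.mpr
            ⟨Finset.mem_univ _, by rw [Fin.lt_def] at hj'; omega, hne⟩⟩
        have hnq : ¬ Qp A i (j₁.val + 1) := by
          rintro ⟨j, hj, hj1, -⟩
          exact hs2 ⟨j, Finset.mem_filter.mpr
            ⟨Finset.mem_univ _, hj, by rw [hj1]; norm_num⟩⟩
        have hq0 : Qp A i j₀ := by
          refine ⟨j₁, hj₁p.1, hv, fun j' hj' hlt => ?_⟩
          by_contra hne
          have := hmin j' hj' hne; omega
        rw [hsum, hrec, if_neg hnq, if_pos hq0, hv]; norm_num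
    · have hzero : ∀ j ∈ Finset.univ.filter (fun j : Fin m => j₀ ≤ j.val), A i j = 0 := by
        intro j hj
        simp only [Finset.mem_filter, Finset.mem_univ, true_and] at hj
        by_contra hne
        exact hs ⟨j, Finset.mem_filter.mpr ⟨Finset.mem_univ _, hj, hne⟩⟩
      have hnq : ¬ Qp A i j₀ := by
        rintro ⟨j, hj, hj1, -⟩
        exact hs ⟨j, Finset.mem_filter.mpr ⟨Finset.mem_univ _, hj, by rw [hj1]; norm_num⟩⟩
      rw [Finset.sum_eq_zero hzero, if_neg hnq]

lemma cpm_eq_WE_iff {n m : ℕ} (A : Fin (2 * n) → Fin m → ℤ) (i : Fin (2 * n)) (j : Fin m) :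
    cpm A i j = CP.WE ↔ A i j = 1 := by
  unfold cpm; split_ifs <;> simp_all

lemma cpm_eq_NS_iff {n m : ℕ} (A : Fin (2 * n) → Fin m → ℤ) (i : Fin (2 * n)) (j : Fin m) :
    cpm A i j = CP.NS ↔ A i j = -1 := by
  unfold cpm; split_ifs <;> simp_all

set_option maxHeartbeats 1600000 in
/-- Equation `eqn-WE-NS`: in each row of the compass point matrix of a U-turn ASM,
`#WE_i = #NS_i + χ(P_i)`, where `P_i` holds iff the first entry of the row
lies in `{WE, SW, NW}`. -/
theorem card_WE_eq_card_NS_add (n : ℕ) (hn : 0 < n)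
    (lam : Fin n → ℕ) (hlam : StrictAnti lam) (hlpos : ∀ i, 0 < lam i)
    (m : ℕ) (hm : m = lam ⟨0, hn⟩) (hm0 : 0 < m)
    (A : Fin (2 * n) → Fin m → ℤ) (hA : IsUASM n m lam A) (i : Fin (2 * n)) :
    (Finset.univ.filter fun j : Fin m => cpm A i j = CP.WE).card
      = (Finset.univ.filter fun j : Fin m => cpm A i j = CP.NS).card
        + (if cpm A i ⟨0, hm0⟩ = CP.WE ∨ cpm A i ⟨0, hm0⟩ = CP.SW ∨
              cpm A i ⟨0, hm0⟩ = CP.NW then 1 else 0) := by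
  obtain ⟨h1, h2, -, -, h5, -, -, -, -⟩ := hA
  -- the row sum equals the indicator of `Qp A i 0`
  have hsum0 : (∑ j, A i j) = if Qp A i 0 then 1 else 0 := by
    have := tail_sum A i (h1 i) (h2 i) (h5 i) m 0 (by omega)
    simpa using this
  -- identify the WE and NS filters
  have hWE : (Finset.univ.filter fun j : Fin m => cpm A i j = CP.WE)
      = Finset.univ.filter fun j : Fin m => A i j = 1 := by
    exact Finset.filter_congr fun j _ => cpm_eq_WE_iff A i j
  have hNS : (Finset.univ.filter fun j : Fin m => cpm A i j = CP.NS)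
      = Finset.univ.filter fun j : Fin m => A i j = -1 := by
    exact Finset.filter_congr fun j _ => cpm_eq_NS_iff A i j
  -- the sum as a difference of cardinalities
  have hcardsum : (∑ j, A i j)
      = ((Finset.univ.filter fun j : Fin m => A i j = 1).card : ℤ)
        - ((Finset.univ.filter fun j : Fin m => A i j = -1).card : ℤ) := by
    calc (∑ j, A i j)
        = ∑ j : Fin m, ((if A i j = 1 then (1:ℤ) else 0) - (if A i j = -1 then (1:ℤ) else 0)) :=
          Finset.sum_congr rfl (fun j _ => by rcases h1 i j with h|h|h <;> norm_num [h])
      _ = _ := by rw [Finset.sum_sub_distrib, Finset.sum_boole, Finset.sum_boole]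
  -- the indicator condition is equivalent to `Qp A i 0`
  have hchi : (cpm A i ⟨0, hm0⟩ = CP.WE ∨ cpm A i ⟨0, hm0⟩ = CP.SW ∨
      cpm A i ⟨0, hm0⟩ = CP.NW) ↔ Qp A i 0 := by
    rcases h1 i ⟨0, hm0⟩ with h0 | h0 | h0
    · -- first entry is -1 : cpm is NS, Qp fails
      have hc : cpm A i ⟨0, hm0⟩ = CP.NS := by
        unfold cpm; rw [if_neg (by rw [h0]; norm_num), if_pos h0]
      constructor
      · intro h; rw [hc] at h; rcases h with h|h|h <;> exact CP.noConfusion h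
      · rintro ⟨j, -, hj1, hj0⟩
        by_cases hj : j.val = 0
        · rw [show j = ⟨0, hm0⟩ from Fin.ext hj, h0] at hj1; norm_num at hj1
        · have := hj0 ⟨0, hm0⟩ (by simp) (by show 0 < j.val; omega)
          rw [this] at h0; norm_num at h0
    · -- first entry is 0 : condition reduces to eastV = 1, which is Qp
      have heast : eastV A i ⟨0, hm0⟩ = 1 ↔ Qp A i 0 := by
        unfold eastV
        by_cases hne : (Finset.univ.filter
            (fun j' : Fin m => (⟨0, hm0⟩ : Fin m) < j' ∧ A i j' ≠ 0)).Nonempty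
        · rw [dif_pos hne]
          set s := Finset.univ.filter
            (fun j' : Fin m => (⟨0, hm0⟩ : Fin m) < j' ∧ A i j' ≠ 0) with hsdef
          set j₂ := s.min' hne with hj₂def
          have hj₂mem : j₂ ∈ s := s.min'_mem hne
          have hj₂p : (⟨0, hm0⟩ : Fin m) < j₂ ∧ A i j₂ ≠ 0 := by
            have := hj₂mem; rw [hsdef, Finset.mem_filter] at this; exact this.2
          have hmin2 : ∀ j : Fin m, 0 < j.val → A i j ≠ 0 → j₂.val ≤ j.val := by
            intro j hj hnz
            exact Fin.le_def.mp (s.min'_le j (by rw [hsdef, Finset.mem_filter]; exact ⟨Finset.mem_univ _, by rw [Fin.lt_def]; exact hj, hnz⟩))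
          constructor
          · intro hv
            refine ⟨j₂, Nat.zero_le _, hv, fun j' _ hlt => ?_⟩
            by_cases hz : j'.val = 0
            · rwa [show j' = ⟨0, hm0⟩ from Fin.ext hz]
            · by_contra hnz
              have := hmin2 j' (by omega) hnz; omega
          · rintro ⟨j, -, hj1, hj0⟩
            have hjpos : 0 < j.val := by
              by_contra hz
              rw [show j = ⟨0, hm0⟩ from Fin.ext (by show j.val = (0:ℕ); omega), h0] at hj1; norm_num at hj1
            have hle : j₂.val ≤ j.val := hmin2 j hjpos (by rw [hj1]; norm_num)
            rcases eq_or_lt_of_le hle with heq | hlt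
            · rwa [show j₂ = j from Fin.ext heq]
            · have := hj0 j₂ (Nat.zero_le _) hlt
              exact absurd this hj₂p.2
        · rw [dif_neg hne]
          constructor
          · intro h; norm_num at h
          · rintro ⟨j, -, hj1, -⟩
            have hjpos : 0 < j.val := by
              by_contra hz
              rw [show j = ⟨0, hm0⟩ from Fin.ext (by show j.val = (0:ℕ); omega), h0] at hj1; norm_num at hj1
            exact absurd ⟨j, Finset.mem_filter.mpr ⟨Finset.mem_univ _,
              by rw [Fin.lt_def]; exact hjpos, by rw [hj1]; norm_num⟩⟩ hne
      have hcond : (cpm A i ⟨0, hm0⟩ = CP.WE ∨ cpm A i ⟨0, hm0⟩ = CP.SW ∨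
          cpm A i ⟨0, hm0⟩ = CP.NW) ↔ eastV A i ⟨0, hm0⟩ = 1 := by
        unfold cpm
        rw [if_neg (by rw [h0]; norm_num), if_neg (by rw [h0]; norm_num)]
        by_cases hE : eastV A i ⟨0, hm0⟩ = 1 <;>
          by_cases hN : northV A i ⟨0, hm0⟩ = 1 <;> simp [hE, hN]
      exact hcond.trans heast
    · -- first entry is 1 : cpm is WE, Qp holds
      have hc : cpm A i ⟨0, hm0⟩ = CP.WE := by unfold cpm; rw [if_pos h0]
      constructor
      · intro _
        exact ⟨⟨0, hm0⟩, by simp, h0, fun j' _ hlt => by simp at hlt⟩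
      · intro _; exact Or.inl hc
  rw [hWE, hNS, if_congr hchi rfl rfl]
  have key : ((Finset.univ.filter fun j : Fin m => A i j = 1).card : ℤ)
      - ((Finset.univ.filter fun j : Fin m => A i j = -1).card : ℤ)
      = if Qp A i 0 then 1 else 0 := by rw [← hcardsum, hsum0]
  by_cases hq : Qp A i 0 <;> simp only [hq, if_pos, if_neg, if_true, if_false] at key ⊢ <;> omega
end TokC
end

section
/- Let λ be a strict partition with exactly n parts and let A ∈ UA^λ(n) with compass point matrix C(A). Then for every k = 1, …, n: χ(P_k) + χ(P_k̄) = 1; that is, exactly one of the first entries c_{k1}, c_{k̄1} of rows k and k̄ of C(A) lies in {WE, SW, NW}. -/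
/-!
In a row whose nonzero entries alternate in sign and end with a 1, the entries strictly to the
right of any position sum to 1 if the nearest nonzero entry to the right is 1, and to 0
otherwise. Taken at the first column, the row sum is therefore 1 exactly when the first entry
is 1, or is 0 with nearest nonzero entry 1 to its right, i.e. exactly when the first compass
point lies in {WE, SW, NW}. The U-turn condition row_k + row_k̄ = 1 then gives the claim.
-/

open scoped Classical BigOperators

namespace TokC

section RowSums

variable {n m : ℕ} {A : Fin (2 * n) → Fin m → ℤ} {i : Fin (2 * n)}

structure IsAltSignRow (A : Fin (2 * n) → Fin m → ℤ) (i : Fin (2 * n)) : Prop where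
  mem : ∀ j, A i j = -1 ∨ A i j = 0 ∨ A i j = 1
  alt : ∀ j₁ j₂ : Fin m, j₁ < j₂ → A i j₁ ≠ 0 → A i j₂ ≠ 0 →
    (∀ j, j₁ < j → j < j₂ → A i j = 0) → A i j₂ = -A i j₁
  last : ∀ j : Fin m, A i j ≠ 0 → (∀ j', j < j' → A i j' = 0) → A i j = 1

theorem eastV_cases (A : Fin (2 * n) → Fin m → ℤ) (i : Fin (2 * n)) (j : Fin m) :
    (eastV A i j = -1 ∧ ∀ j', j < j' → A i j' = 0) ∨
      ∃ j₁, j < j₁ ∧ A i j₁ ≠ 0 ∧ (∀ j', j < j' → j' < j₁ → A i j' = 0) ∧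
        eastV A i j = A i j₁ := by
  set s := Finset.univ.filter fun j' : Fin m => j < j' ∧ A i j' ≠ 0 with hs
  by_cases hne : s.Nonempty
  · have hmin := Finset.min'_mem s hne
    simp only [hs, Finset.mem_filter, Finset.mem_univ, true_and] at hmin
    refine Or.inr ⟨s.min' hne, hmin.1, hmin.2, fun j' hj hj' => ?_, by rw [eastV, dif_pos hne]⟩
    by_contra h
    exact (Finset.min'_le s j' (by simp [hs, hj, h])).not_gt hj'
  · refine Or.inl ⟨by rw [eastV, dif_neg hne], fun j' hj => ?_⟩
    by_contra h
    exact hne ⟨j', by simp [hs, hj, h]⟩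

theorem IsAltSignRow.eastV_eq_neg (hA : IsAltSignRow A i) {j : Fin m} (hj : A i j ≠ 0) :
    eastV A i j = -A i j := by
  rcases eastV_cases A i j with ⟨hE, h0⟩ | ⟨j₁, hj₁, h₁, h0, hE⟩
  · rw [hE, hA.last j hj h0]
  · rw [hE, hA.alt j j₁ hj₁ hj h₁ h0]

theorem IsAltSignRow.sum_Ioi_eq_ite (hA : IsAltSignRow A i) (j : Fin m) :
    ∑ j' ∈ Finset.Ioi j, A i j' = if eastV A i j = 1 then 1 else 0 := by
  induction j using WellFoundedGT.induction with
  | _ j ih =>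
    rcases eastV_cases A i j with ⟨hE, h0⟩ | ⟨j₁, hj₁, h₁, h0, hE⟩
    · rw [hE, Finset.sum_eq_zero fun j' hj' => h0 j' (Finset.mem_Ioi.1 hj')]
      norm_num
    · have hsplit : ∑ j' ∈ Finset.Ioi j, A i j' = A i j₁ + ∑ j' ∈ Finset.Ioi j₁, A i j' := by
        rw [← Finset.sum_cons Finset.notMem_Ioi_self, ← Finset.Ici_eq_cons_Ioi]
        refine (Finset.sum_subset (fun x hx => ?_) fun x hx hx' => ?_).symm
        · exact Finset.mem_Ioi.2 (hj₁.trans_le (Finset.mem_Ici.1 hx))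
        · exact h0 x (Finset.mem_Ioi.1 hx) (not_le.1 fun h => hx' (Finset.mem_Ici.2 h))
      rw [hsplit, ih j₁ hj₁, hA.eastV_eq_neg h₁, hE]
      rcases hA.mem j₁ with h | h | h <;> simp_all

theorem cpm_eq_WE_or_SW_or_NW_iff {j : Fin m} (h : A i j = -1 ∨ A i j = 0 ∨ A i j = 1) :
    (cpm A i j = CP.WE ∨ cpm A i j = CP.SW ∨ cpm A i j = CP.NW) ↔
      A i j = 1 ∨ A i j = 0 ∧ eastV A i j = 1 := by
  rcases h with h | h | h <;> simp only [cpm, h] <;> split_ifs <;> simp_all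

theorem IsAltSignRow.sum_Ici_eq_ite (hA : IsAltSignRow A i) (j : Fin m) :
    ∑ j' ∈ Finset.Ici j, A i j' =
      if cpm A i j = CP.WE ∨ cpm A i j = CP.SW ∨ cpm A i j = CP.NW then 1 else 0 := by
  rw [Finset.Ici_eq_cons_Ioi, Finset.sum_cons, hA.sum_Ioi_eq_ite,
    if_congr (cpm_eq_WE_or_SW_or_NW_iff (hA.mem j)) rfl rfl]
  rcases hA.mem j with h | h | h <;> simp [h, hA.eastV_eq_neg]

end RowSums

theorem chi_P_add_chi_Pbar_general (n : ℕ)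
    (lam : Fin n → ℕ)
    (m : ℕ) (hm0 : 0 < m)
    (A : Fin (2 * n) → Fin m → ℤ) (hA : IsUASM n m lam A) (k : Fin n) :
    (if cpm A (rU k) ⟨0, hm0⟩ = CP.WE ∨ cpm A (rU k) ⟨0, hm0⟩ = CP.SW ∨
        cpm A (rU k) ⟨0, hm0⟩ = CP.NW then 1 else 0)
      + (if cpm A (rB k) ⟨0, hm0⟩ = CP.WE ∨ cpm A (rB k) ⟨0, hm0⟩ = CP.SW ∨
        cpm A (rB k) ⟨0, hm0⟩ = CP.NW then 1 else 0) = 1 := by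
  obtain ⟨hval, hrowalt, -, -, hright, -, -, huturn, -⟩ := hA
  have hrow : ∀ i, IsAltSignRow A i := fun i => ⟨hval i, hrowalt i, hright i⟩
  have hIci : Finset.Ici (⟨0, hm0⟩ : Fin m) = Finset.univ :=
    Finset.eq_univ_of_forall fun j => Finset.mem_Ici.2 (Nat.zero_le j.val)
  have hk := huturn k
  rw [← hIci, (hrow _).sum_Ici_eq_ite, (hrow _).sum_Ici_eq_ite] at hk
  exact_mod_cast hk

/-- The U-turn property on the level of compass point matrices:
`χ(P_k) + χ(P_k̄) = 1`, i.e. exactly one of the first entries of rows `k`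
and `k̄` of `C(A)` lies in `{WE, SW, NW}`. -/
theorem chi_P_add_chi_Pbar (n : ℕ) (hn : 0 < n)
    (lam : Fin n → ℕ) (hlam : StrictAnti lam) (hlpos : ∀ i, 0 < lam i)
    (m : ℕ) (hm : m = lam ⟨0, hn⟩) (hm0 : 0 < m)
    (A : Fin (2 * n) → Fin m → ℤ) (hA : IsUASM n m lam A) (k : Fin n) :
    (if cpm A (rU k) ⟨0, hm0⟩ = CP.WE ∨ cpm A (rU k) ⟨0, hm0⟩ = CP.SW ∨
        cpm A (rU k) ⟨0, hm0⟩ = CP.NW then 1 else 0)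
      + (if cpm A (rB k) ⟨0, hm0⟩ = CP.WE ∨ cpm A (rB k) ⟨0, hm0⟩ = CP.SW ∨
        cpm A (rB k) ⟨0, hm0⟩ = CP.NW then 1 else 0) = 1 :=
  chi_P_add_chi_Pbar_general n lam m hm0 A hA k

end TokC
end

section
/- Let λ be a strict partition with exactly n parts and let A ∈ UA^λ(n) with compass point matrix C(A). Then for every k = 1, …, n: #NS_k + #NW_k + #NE_k = k − 1 and #WE_k̄ + #NW_k̄ + #NE_k̄ = k, where #XY_i denotes the number of entries XY in row i of C(A). -/
open scoped Classical BigOperators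

namespace TokC

/-! ### Auxiliary lemmas for `cpm_row_counts` -/

/-- Partial column sum: sum of entries of column `j` strictly above row `r`. -/
noncomputable def psum {n m : ℕ} (A : Fin (2 * n) → Fin m → ℤ) (r : Fin (2 * n)) (j : Fin m) : ℤ :=
  ∑ i ∈ Finset.univ.filter (fun i => i < r), A i j

lemma northV_def {n m : ℕ} (A : Fin (2 * n) → Fin m → ℤ) (i : Fin (2 * n)) (j : Fin m) :
    northV A i j =
      if h : (Finset.univ.filter fun i' : Fin (2 * n) => i' < i ∧ A i' j ≠ 0).Nonempty
      then A ((Finset.univ.filter fun i' : Fin (2 * n) => i' < i ∧ A i' j ≠ 0).max' h) j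
      else -1 := rfl

lemma north_nonzero {n m : ℕ} {lam : Fin n → ℕ} {A : Fin (2 * n) → Fin m → ℤ}
    (hA : IsUASM n m lam A) (r : Fin (2 * n)) (j : Fin m) (h0 : A r j ≠ 0) :
    northV A r j = - A r j := by
  obtain ⟨hent, hrow, hcol, htop, -, -⟩ := hA
  rw [northV_def]
  set s := Finset.univ.filter fun i' : Fin (2 * n) => i' < r ∧ A i' j ≠ 0 with hs
  by_cases hne : s.Nonempty
  · rw [dif_pos hne]
    have hmem := Finset.mem_filter.mp (s.max'_mem hne)
    have hgap : ∀ i, s.max' hne < i → i < r → A i j = 0 := by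
      intro i h1 h2
      by_contra hne0
      have : i ∈ s := by rw [hs]; simp [h2, hne0]
      exact absurd (s.le_max' i this) (not_le.mpr h1)
    have := hcol j (s.max' hne) r hmem.2.1 hmem.2.2 h0 hgap
    linarith
  · rw [dif_neg hne]
    have : A r j = 1 := by
      apply htop j r h0
      intro i' hi'
      by_contra hne0
      exact hne ⟨i', by rw [hs]; simp [hi', hne0]⟩
    rw [this]

lemma inv_psum {n m : ℕ} {lam : Fin n → ℕ} {A : Fin (2 * n) → Fin m → ℤ}
    (hA : IsUASM n m lam A) (j : Fin m) (r : Fin (2 * n)) :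
    (psum A r j = 0 ∧ northV A r j = -1) ∨ (psum A r j = 1 ∧ northV A r j = 1) := by
  suffices H : ∀ v (hv : v < 2 * n),
      (psum A ⟨v, hv⟩ j = 0 ∧ northV A ⟨v, hv⟩ j = -1) ∨
      (psum A ⟨v, hv⟩ j = 1 ∧ northV A ⟨v, hv⟩ j = 1) by
    obtain ⟨v, hv⟩ := r; exact H v hv
  intro v
  induction v with
  | zero =>
    intro hv
    left
    have h1 : (Finset.univ.filter fun i : Fin (2 * n) => i < (⟨0, hv⟩ : Fin (2 * n))) = ∅ := by
      ext i; simp [Fin.lt_def]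
    have h2 : (Finset.univ.filter fun i' : Fin (2 * n) =>
        i' < (⟨0, hv⟩ : Fin (2 * n)) ∧ A i' j ≠ 0) = ∅ := by
      ext i; simp [Fin.lt_def]
    constructor
    · unfold psum; rw [h1, Finset.sum_empty]
    · rw [northV_def]; simp [h2]
  | succ v ih =>
    intro hv
    have hv' : v < 2 * n := by omega
    have hps : psum A ⟨v + 1, hv⟩ j = A ⟨v, hv'⟩ j + psum A ⟨v, hv'⟩ j := by
      unfold psum
      have hins : (Finset.univ.filter fun i : Fin (2 * n) => i < (⟨v + 1, hv⟩ : Fin (2 * n)))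
          = insert ⟨v, hv'⟩ (Finset.univ.filter fun i => i < (⟨v, hv'⟩ : Fin (2 * n))) := by
        ext i
        simp only [Finset.mem_filter, Finset.mem_univ, true_and, Finset.mem_insert,
          Fin.lt_def, Fin.ext_iff]
        omega
      rw [hins, Finset.sum_insert (by simp [Fin.lt_def])]
    by_cases h0 : A ⟨v, hv'⟩ j = 0
    · have hset : (Finset.univ.filter fun i' : Fin (2 * n) =>
          i' < (⟨v + 1, hv⟩ : Fin (2 * n)) ∧ A i' j ≠ 0)
          = (Finset.univ.filter fun i' : Fin (2 * n) =>
          i' < (⟨v, hv'⟩ : Fin (2 * n)) ∧ A i' j ≠ 0) := by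
        ext i
        simp only [Finset.mem_filter, Finset.mem_univ, true_and, Fin.lt_def]
        constructor
        · rintro ⟨hlt, hnz⟩
          refine ⟨?_, hnz⟩
          rcases Nat.lt_succ_iff_lt_or_eq.mp hlt with h | h
          · exact h
          · exfalso; apply hnz
            have : i = ⟨v, hv'⟩ := Fin.ext h
            rw [this]; exact h0
        · rintro ⟨hlt, hnz⟩; exact ⟨by omega, hnz⟩
      have hnv : northV A ⟨v + 1, hv⟩ j = northV A ⟨v, hv'⟩ j := by
        rw [northV_def, northV_def]
        simp only [hset]
      rcases ih hv' with ⟨h1, h2⟩ | ⟨h1, h2⟩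
      · left; exact ⟨by rw [hps, h0, h1]; ring, by rw [hnv]; exact h2⟩
      · right; exact ⟨by rw [hps, h0, h1]; ring, by rw [hnv]; exact h2⟩
    · have hmax : northV A ⟨v + 1, hv⟩ j = A ⟨v, hv'⟩ j := by
        rw [northV_def]
        have hmem : (⟨v, hv'⟩ : Fin (2 * n)) ∈
            (Finset.univ.filter fun i' : Fin (2 * n) =>
              i' < (⟨v + 1, hv⟩ : Fin (2 * n)) ∧ A i' j ≠ 0) := by
          simp [Fin.lt_def, h0]
        have hne : (Finset.univ.filter fun i' : Fin (2 * n) =>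
            i' < (⟨v + 1, hv⟩ : Fin (2 * n)) ∧ A i' j ≠ 0).Nonempty := ⟨_, hmem⟩
        rw [dif_pos hne]
        congr 1
        apply le_antisymm
        · apply Finset.max'_le
          intro i hi
          simp only [Finset.mem_filter, Finset.mem_univ, true_and, Fin.lt_def] at hi
          exact Fin.mk_le_mk.mpr (by omega)
        · exact Finset.le_max' _ _ hmem
      have hnz := north_nonzero hA ⟨v, hv'⟩ j h0
      rcases ih hv' with ⟨h1, h2⟩ | ⟨h1, h2⟩
      · right
        have hval : A ⟨v, hv'⟩ j = 1 := by rw [h2] at hnz; linarith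
        exact ⟨by rw [hps, hval, h1]; ring, by rw [hmax, hval]⟩
      · left
        have hval : A ⟨v, hv'⟩ j = -1 := by rw [h2] at hnz; linarith
        exact ⟨by rw [hps, hval, h1]; ring, by rw [hmax, hval]⟩

lemma sum_lt_succ {n m : ℕ} (A : Fin (2 * n) → Fin m → ℤ) {v : ℕ} (hv : v < 2 * n) :
    ∑ i ∈ Finset.univ.filter (fun i : Fin (2 * n) => i.val < v + 1), (∑ j, A i j)
    = (∑ i ∈ Finset.univ.filter (fun i : Fin (2 * n) => i.val < v), ∑ j, A i j)
      + ∑ j, A ⟨v, hv⟩ j := by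
  have hins : (Finset.univ.filter fun i : Fin (2 * n) => i.val < v + 1)
      = insert ⟨v, hv⟩ (Finset.univ.filter fun i : Fin (2 * n) => i.val < v) := by
    ext i
    simp only [Finset.mem_filter, Finset.mem_univ, true_and, Finset.mem_insert, Fin.ext_iff]
    omega
  rw [hins, Finset.sum_insert (by simp)]
  ring

lemma sum_lt_even {n m : ℕ} {lam : Fin n → ℕ} {A : Fin (2 * n) → Fin m → ℤ}
    (hA : IsUASM n m lam A) :
    ∀ t : ℕ, t ≤ n →
      (∑ i ∈ Finset.univ.filter (fun i : Fin (2 * n) => i.val < 2 * t), ∑ j, A i j) = t := by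
  intro t
  induction t with
  | zero =>
    intro _
    have : (Finset.univ.filter fun i : Fin (2 * n) => i.val < 2 * 0) = ∅ := by
      ext i; simp
    rw [this, Finset.sum_empty]; rfl
  | succ t ih =>
    intro ht
    have h2t : 2 * t < 2 * n := by omega
    have h2t1 : 2 * t + 1 < 2 * n := by omega
    have he : 2 * (t + 1) = (2 * t + 1) + 1 := by ring
    rw [he, sum_lt_succ A h2t1, sum_lt_succ A h2t, ih (by omega)]
    have hpair := hA.2.2.2.2.2.2.2.1 ⟨t, by omega⟩
    have e1 : rU (⟨t, by omega⟩ : Fin n) = (⟨2 * t, h2t⟩ : Fin (2 * n)) := rfl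
    have e2 : rB (⟨t, by omega⟩ : Fin n) = (⟨2 * t + 1, h2t1⟩ : Fin (2 * n)) := rfl
    rw [e1, e2] at hpair
    push_cast
    linarith

lemma psum_row {n m : ℕ} (A : Fin (2 * n) → Fin m → ℤ) (r : Fin (2 * n)) :
    ∑ j, psum A r j
      = ∑ i ∈ Finset.univ.filter (fun i : Fin (2 * n) => i.val < r.val), ∑ j, A i j := by
  unfold psum
  rw [Finset.sum_comm]
  apply Finset.sum_congr _ (fun _ _ => rfl)
  ext i
  simp only [Finset.mem_filter, Finset.mem_univ, true_and, Fin.lt_def]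

/-- Lemma `lem-NE-NW`: row counts in the compass point matrix of a U-turn ASM:
`#NS_k + #NW_k + #NE_k = k - 1` and `#WE_k̄ + #NW_k̄ + #NE_k̄ = k`. -/
theorem cpm_row_counts (n : ℕ) (hn : 0 < n)
    (lam : Fin n → ℕ) (hlam : StrictAnti lam) (hlpos : ∀ i, 0 < lam i)
    (m : ℕ) (hm : m = lam ⟨0, hn⟩)
    (A : Fin (2 * n) → Fin m → ℤ) (hA : IsUASM n m lam A) (k : Fin n) :
    (Finset.univ.filter fun j : Fin m => cpm A (rU k) j = CP.NS).card
        + (Finset.univ.filter fun j : Fin m => cpm A (rU k) j = CP.NW).card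
        + (Finset.univ.filter fun j : Fin m => cpm A (rU k) j = CP.NE).card
      = k.val ∧
    (Finset.univ.filter fun j : Fin m => cpm A (rB k) j = CP.WE).card
        + (Finset.univ.filter fun j : Fin m => cpm A (rB k) j = CP.NW).card
        + (Finset.univ.filter fun j : Fin m => cpm A (rB k) j = CP.NE).card
      = k.val + 1 := by
  classical
  have key1 : ∀ (r : Fin (2 * n)) (j : Fin m),
      (if cpm A r j = CP.NS then (1 : ℤ) else 0)
        + (if cpm A r j = CP.NW then 1 else 0)
        + (if cpm A r j = CP.NE then 1 else 0) = psum A r j := by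
    intro r j
    rcases inv_psum hA j r with ⟨hp, hv⟩ | ⟨hp, hv⟩ <;>
      rcases hA.1 r j with h | h | h
    · exfalso
      have := north_nonzero hA r j (by rw [h]; norm_num)
      rw [h, hv] at this; norm_num at this
    · have : cpm A r j = CP.SW ∨ cpm A r j = CP.SE := by
        rcases em (eastV A r j = 1) with he | he <;> unfold cpm <;> rw [h, hv] <;> norm_num [he]
      rcases this with hc | hc <;> rw [hc] <;> simp [hp]
    · have hc : cpm A r j = CP.WE := by unfold cpm; rw [h]; simp
      rw [hc]; simp [hp]
    · have hc : cpm A r j = CP.NS := by unfold cpm; rw [h]; norm_num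
      rw [hc]; simp [hp]
    · have : cpm A r j = CP.NW ∨ cpm A r j = CP.NE := by
        rcases em (eastV A r j = 1) with he | he <;> unfold cpm <;> rw [h, hv] <;> norm_num [he]
      rcases this with hc | hc <;> rw [hc] <;> simp [hp]
    · exfalso
      have := north_nonzero hA r j (by rw [h]; norm_num)
      rw [h, hv] at this; norm_num at this
  have key2 : ∀ (r : Fin (2 * n)) (j : Fin m),
      (if cpm A r j = CP.WE then (1 : ℤ) else 0)
        + (if cpm A r j = CP.NW then 1 else 0)
        + (if cpm A r j = CP.NE then 1 else 0) = psum A r j + A r j := by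
    intro r j
    rcases inv_psum hA j r with ⟨hp, hv⟩ | ⟨hp, hv⟩ <;>
      rcases hA.1 r j with h | h | h
    · exfalso
      have := north_nonzero hA r j (by rw [h]; norm_num)
      rw [h, hv] at this; norm_num at this
    · have : cpm A r j = CP.SW ∨ cpm A r j = CP.SE := by
        rcases em (eastV A r j = 1) with he | he <;> unfold cpm <;> rw [h, hv] <;> norm_num [he]
      rcases this with hc | hc <;> rw [hc] <;> simp [hp, h]
    · have hc : cpm A r j = CP.WE := by unfold cpm; rw [h]; simp
      rw [hc]; simp [hp, h]
    · have hc : cpm A r j = CP.NS := by unfold cpm; rw [h]; norm_num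
      rw [hc]; simp [hp, h]
    · have : cpm A r j = CP.NW ∨ cpm A r j = CP.NE := by
        rcases em (eastV A r j = 1) with he | he <;> unfold cpm <;> rw [h, hv] <;> norm_num [he]
      rcases this with hc | hc <;> rw [hc] <;> simp [hp, h]
    · exfalso
      have := north_nonzero hA r j (by rw [h]; norm_num)
      rw [h, hv] at this; norm_num at this
  constructor
  · have h1 : (((Finset.univ.filter fun j : Fin m => cpm A (rU k) j = CP.NS).card
        + (Finset.univ.filter fun j : Fin m => cpm A (rU k) j = CP.NW).card
        + (Finset.univ.filter fun j : Fin m => cpm A (rU k) j = CP.NE).card : ℕ) : ℤ)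
        = ∑ j, psum A (rU k) j := by
      push_cast
      rw [← Finset.sum_boole, ← Finset.sum_boole, ← Finset.sum_boole,
        ← Finset.sum_add_distrib, ← Finset.sum_add_distrib]
      exact Finset.sum_congr rfl fun j _ => key1 (rU k) j
    rw [psum_row] at h1
    have hval : (rU k).val = 2 * k.val := rfl
    rw [hval, sum_lt_even hA k.val k.isLt.le] at h1
    exact_mod_cast h1
  · have h2 : (((Finset.univ.filter fun j : Fin m => cpm A (rB k) j = CP.WE).card
        + (Finset.univ.filter fun j : Fin m => cpm A (rB k) j = CP.NW).card
        + (Finset.univ.filter fun j : Fin m => cpm A (rB k) j = CP.NE).card : ℕ) : ℤ)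
        = (∑ j, psum A (rB k) j) + ∑ j, A (rB k) j := by
      push_cast
      rw [← Finset.sum_boole, ← Finset.sum_boole, ← Finset.sum_boole,
        ← Finset.sum_add_distrib, ← Finset.sum_add_distrib, ← Finset.sum_add_distrib]
      exact Finset.sum_congr rfl fun j _ => key2 (rB k) j
    rw [psum_row] at h2
    have h2t : 2 * k.val < 2 * n := by have := k.isLt; omega
    have hval : (rB k).val = 2 * k.val + 1 := rfl
    rw [hval, sum_lt_succ A h2t, sum_lt_even hA k.val k.isLt.le] at h2
    have hpair := hA.2.2.2.2.2.2.2.1 k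
    have e1 : (⟨2 * k.val, h2t⟩ : Fin (2 * n)) = rU k := rfl
    rw [e1] at h2
    have : (((Finset.univ.filter fun j : Fin m => cpm A (rB k) j = CP.WE).card
        + (Finset.univ.filter fun j : Fin m => cpm A (rB k) j = CP.NW).card
        + (Finset.univ.filter fun j : Fin m => cpm A (rB k) j = CP.NE).card : ℕ) : ℤ)
        = (k.val : ℤ) + 1 := by rw [h2]; linarith
    exact_mod_cast this

end TokC
end
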